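/- arXiv:0903.2974 — 2 statements merged into one kernel-verified Lean document; each statement's English description precedes it below -/
import Mathlib

section
/- Let A be a Hopf *-algebra (over ℂ) and B a *-algebra which is a right A-module algebra satisfying (b ◁ a)* = b* ◁ S(a)*. Then the smash product A # B is a *-algebra with involution determined by (π_A(a)π_B(b))* = π_B(b)*π_A(a)*, explicitly (a # b)* = (1 # b*)(a* # 1) = Σ a*₍₁₎ # (b* ◁ a*₍₂₎); in particular this involution is an anti-multiplicative involution on A # B. -/
open TensorProduct

/-- The twist map `R : B ⊗ A → A ⊗ B`, `R(b ⊗ a) = Σ a₍₁₎ ⊗ (b ◁ a₍₂₎)`. -/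
noncomputable def twistR (R : Type*) [CommRing R] (A B : Type*) [Ring A] [HopfAlgebra R A]
    [Ring B] [Algebra R B] (act : B ⊗[R] A →ₗ[R] B) :
    B ⊗[R] A →ₗ[R] A ⊗[R] B :=
  LinearMap.lTensor A (act ∘ₗ (TensorProduct.comm R A B).toLinearMap) ∘ₗ
    (TensorProduct.assoc R A A B).toLinearMap ∘ₗ
    (TensorProduct.comm R B (A ⊗[R] A)).toLinearMap ∘ₗ
    LinearMap.lTensor B (Coalgebra.comul (R := R) (A := A))

/-- The smash product multiplication `(m_A ⊗ m_B)(id_A ⊗ R ⊗ id_B)` on `A ⊗ B`,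
i.e. `(a # b)(a' # b') = Σ a a'₍₁₎ # (b ◁ a'₍₂₎) b'`. -/
noncomputable def smashMul (R : Type*) [CommRing R] (A B : Type*) [Ring A] [HopfAlgebra R A]
    [Ring B] [Algebra R B] (act : B ⊗[R] A →ₗ[R] B) :
    (A ⊗[R] B) ⊗[R] (A ⊗[R] B) →ₗ[R] A ⊗[R] B :=
  LinearMap.lTensor A (LinearMap.mul' R B) ∘ₗ
    (TensorProduct.assoc R A B B).toLinearMap ∘ₗ
    LinearMap.rTensor B (LinearMap.rTensor B (LinearMap.mul' R A)) ∘ₗ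
    LinearMap.rTensor B (TensorProduct.assoc R A A B).symm.toLinearMap ∘ₗ
    LinearMap.rTensor B (LinearMap.lTensor A (twistR R A B act)) ∘ₗ
    LinearMap.rTensor B (TensorProduct.assoc R A B A).toLinearMap ∘ₗ
    (TensorProduct.assoc R (A ⊗[R] B) A B).symm.toLinearMap


set_option synthInstance.maxHeartbeats 1000000
set_option maxHeartbeats 4000000
set_option linter.unusedSectionVars false

namespace SmashAux

variable {A B : Type*} [Ring A] [HopfAlgebra ℂ A] [Ring B] [Algebra ℂ B]

noncomputable def J (act : B ⊗[ℂ] A →ₗ[ℂ] B) (m : B) : A →ₗ[ℂ] B :=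
  act ∘ₗ TensorProduct.mk ℂ B A m

@[simp] lemma J_apply (act : B ⊗[ℂ] A →ₗ[ℂ] B) (m : B) (q : A) :
    J act m q = act (m ⊗ₜ q) := rfl

noncomputable def chi (act : B ⊗[ℂ] A →ₗ[ℂ] B) : (A ⊗[ℂ] A) ⊗[ℂ] B →ₗ[ℂ] A ⊗[ℂ] B :=
  LinearMap.lTensor A (act ∘ₗ (TensorProduct.comm ℂ A B).toLinearMap) ∘ₗ
    (TensorProduct.assoc ℂ A A B).toLinearMap

@[simp] lemma chi_tmul (act : B ⊗[ℂ] A →ₗ[ℂ] B) (p q : A) (m : B) :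
    chi act ((p ⊗ₜ q) ⊗ₜ m) = p ⊗ₜ act (m ⊗ₜ q) := by
  simp [chi]

lemma chi_map (act : B ⊗[ℂ] A →ₗ[ℂ] B) (y : A ⊗[ℂ] A) (m : B) :
    chi act (y ⊗ₜ m) = TensorProduct.map LinearMap.id (J act m) y := by
  induction y using TensorProduct.induction_on with
  | zero => simp
  | tmul p q => simp
  | add u v hu hv => rw [add_tmul, map_add, map_add, hu, hv]

lemma twistR_tmul (act : B ⊗[ℂ] A →ₗ[ℂ] B) (m : B) (a : A) :
    twistR ℂ A B act (m ⊗ₜ a) = chi act ((Coalgebra.comul a) ⊗ₜ m) := by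
  simp [twistR, chi]

lemma twistR_tmul' (act : B ⊗[ℂ] A →ₗ[ℂ] B) (m : B) (a : A) :
    twistR ℂ A B act (m ⊗ₜ a) =
      TensorProduct.map LinearMap.id (J act m) (Coalgebra.comul a) := by
  rw [twistR_tmul, chi_map]

lemma smashMul_tmul (act : B ⊗[ℂ] A →ₗ[ℂ] B) (a : A) (b : B) (a' : A) (b' : B) :
    smashMul ℂ A B act ((a ⊗ₜ b) ⊗ₜ (a' ⊗ₜ b')) =
      TensorProduct.map (LinearMap.mulLeft ℂ a) (LinearMap.mulRight ℂ b' ∘ₗ J act b)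
        (Coalgebra.comul a') := by
  simp only [smashMul, LinearMap.comp_apply, LinearEquiv.coe_coe, assoc_symm_tmul,
    LinearMap.rTensor_tmul, assoc_tmul, LinearMap.lTensor_tmul]
  rw [twistR_tmul']
  generalize (Coalgebra.comul a' : A ⊗[ℂ] A) = y
  induction y using TensorProduct.induction_on with
  | zero => simp
  | tmul p q => simp
  | add u v hu hv => simp only [map_add, tmul_add, add_tmul] at hu hv ⊢; rw [hu, hv]

variable [StarRing A] [StarModule ℂ A] [StarRing B] [StarModule ℂ B]

noncomputable def cstar : A ⊗[ℂ] A →+ A ⊗[ℂ] A :=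
  TensorProduct.liftAddHom
    { toFun := fun p =>
        { toFun := fun q => star p ⊗ₜ star q
          map_zero' := by simp
          map_add' := fun q q' => by simp [star_add, tmul_add] }
      map_zero' := by ext q; simp
      map_add' := fun p p' => by ext q; simp [star_add, add_tmul] }
    (fun c p q => by
      show star (c • p) ⊗ₜ star q = star p ⊗ₜ star (c • q)
      rw [star_smul, star_smul, TensorProduct.smul_tmul])

@[simp] lemma cstar_tmul (p q : A) :
    (cstar : A ⊗[ℂ] A →+ A ⊗[ℂ] A) (p ⊗ₜ q) = star p ⊗ₜ star q := by
  simp [cstar]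

noncomputable def Tmap : A →ₗ[ℂ] A where
  toFun x := star (HopfAlgebra.antipode (R := ℂ) (star x))
  map_add' x y := by simp [star_add]
  map_smul' c x := by simp [star_smul]

@[simp] lemma Tmap_apply (x : A) :
    (Tmap : A →ₗ[ℂ] A) x = star (HopfAlgebra.antipode (R := ℂ) (star x)) := rfl

noncomputable def nmap : A ⊗[ℂ] A →ₗ[ℂ] A :=
  LinearMap.mul' ℂ A ∘ₗ TensorProduct.map Tmap LinearMap.id ∘ₗ
    (TensorProduct.comm ℂ A A).toLinearMap

@[simp] lemma nmap_tmul (p q : A) :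
    (nmap : A ⊗[ℂ] A →ₗ[ℂ] A) (p ⊗ₜ q) = Tmap q * p := by
  simp [nmap]

end SmashAux

open SmashAux



/-- Let `A` be a Hopf `*`-algebra over `ℂ` and `B` a `*`-algebra which is a right
`A`-module algebra satisfying `(b ◁ a)* = b* ◁ S(a)*`.  Then the map
`σ(a # b) = Σ a*₍₁₎ # (b* ◁ a*₍₂₎)` is an anti-multiplicative involution on the
smash product `A # B`, and `σ(a # b) = (1 # b*)(a* # 1)`. -/
theorem smash_star_algebra (A B : Type*) [Ring A] [HopfAlgebra ℂ A]
    [StarRing A] [StarModule ℂ A] [Ring B] [Algebra ℂ B] [StarRing B] [StarModule ℂ B]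
    (act : B ⊗[ℂ] A →ₗ[ℂ] B)
    (hmod : ∀ (b : B) (a a' : A), act (act (b ⊗ₜ a) ⊗ₜ a') = act (b ⊗ₜ (a * a')))
    (hone : ∀ b : B, act (b ⊗ₜ (1 : A)) = b)
    (hma : ∀ (a : A) (b b' : B),
      act ((b * b') ⊗ₜ a) =
        (LinearMap.mul' ℂ B ∘ₗ
          TensorProduct.map (act ∘ₗ TensorProduct.mk ℂ B A b)
            (act ∘ₗ TensorProduct.mk ℂ B A b')) (Coalgebra.comul a))
    (hunit : ∀ a : A, act ((1 : B) ⊗ₜ a) = Coalgebra.counit (R := ℂ) a • (1 : B))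
    -- `A` is a Hopf `*`-algebra: the comultiplication is a `*`-map, where `τ` is the
    -- (conjugate-linear) entrywise star map on `A ⊗ A`:
    (τ : A ⊗[ℂ] A → A ⊗[ℂ] A)
    (hτadd : ∀ x y, τ (x + y) = τ x + τ y)
    (hτsmul : ∀ (c : ℂ) x, τ (c • x) = star c • τ x)
    (hτ : ∀ a a' : A, τ (a ⊗ₜ a') = star a ⊗ₜ star a')
    (hcomulstar : ∀ a : A, Coalgebra.comul (R := ℂ) (star a) = τ (Coalgebra.comul a))
    -- the action is compatible with the stars: `(b ◁ a)* = b* ◁ S(a)*`: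
    (hstaract : ∀ (a : A) (b : B),
      star (act (b ⊗ₜ a)) = act (star b ⊗ₜ star (HopfAlgebra.antipode (R := ℂ) a)))
    -- `σ` is the (conjugate-linear) map `σ(a # b) = Σ a*₍₁₎ # (b* ◁ a*₍₂₎)`:
    (σ : A ⊗[ℂ] B → A ⊗[ℂ] B)
    (hσadd : ∀ x y, σ (x + y) = σ x + σ y)
    (hσsmul : ∀ (c : ℂ) x, σ (c • x) = star c • σ x)
    (hσ : ∀ (a : A) (b : B), σ (a ⊗ₜ b) = twistR ℂ A B act (star b ⊗ₜ star a)) :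
    (∀ (a : A) (b : B),
      σ (a ⊗ₜ b) = smashMul ℂ A B act (((1 : A) ⊗ₜ star b) ⊗ₜ (star a ⊗ₜ (1 : B)))) ∧
    (∀ x y : A ⊗[ℂ] B,
      σ (smashMul ℂ A B act (x ⊗ₜ y)) = smashMul ℂ A B act (σ y ⊗ₜ σ x)) ∧
    (∀ x : A ⊗[ℂ] B, σ (σ x) = x) := by
  have hσ0 : σ 0 = 0 := by
    have h := hσadd 0 0
    rw [add_zero] at h
    exact (add_eq_left.mp h.symm)
  have hτ0 : τ 0 = 0 := by
    have h := hτadd 0 0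
    rw [add_zero] at h
    exact (add_eq_left.mp h.symm)
  have hτc : ∀ z : A ⊗[ℂ] A, τ z = cstar z := by
    intro z
    induction z using TensorProduct.induction_on with
    | zero => simp [hτ0]
    | tmul p q => rw [hτ, cstar_tmul]
    | add u v hu hv => rw [hτadd, map_add, hu, hv]
  have hΔs : ∀ x : A, Coalgebra.comul (R := ℂ) (star x) = cstar (Coalgebra.comul x) := by
    intro x; rw [hcomulstar, hτc]
  -- counit and star
  let φ : A →ₗ[ℂ] ℂ :=
    { toFun := fun x => star (Coalgebra.counit (R := ℂ) (star x))
      map_add' := fun x y => by simp [star_add]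
      map_smul' := fun c x => by
        simp [star_smul, smul_eq_mul, star_mul', mul_comm] }
  have hφ_apply : ∀ x : A, φ x = star (Coalgebra.counit (R := ℂ) (star x)) := fun _ => rfl
  have key0 : ∀ y : A ⊗[ℂ] A,
      TensorProduct.lid ℂ A (LinearMap.rTensor A φ y)
        = star (TensorProduct.lid ℂ A
            (LinearMap.rTensor A (Coalgebra.counit (R := ℂ)) (cstar y))) := by
    intro y
    induction y using TensorProduct.induction_on with
    | zero => simp
    | tmul p q => simp [hφ_apply, star_smul]
    | add u v hu hv => simp only [map_add, star_add, hu, hv]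
  have key1 : ∀ x : A,
      TensorProduct.lid ℂ A (LinearMap.rTensor A φ (Coalgebra.comul x)) = x := by
    intro x
    rw [key0, ← hΔs, Coalgebra.rTensor_counit_comul]
    simp
  have key2 : ∀ y : A ⊗[ℂ] A,
      Coalgebra.counit (R := ℂ) (TensorProduct.lid ℂ A (LinearMap.rTensor A φ y))
        = φ (TensorProduct.rid ℂ A
            (LinearMap.lTensor A (Coalgebra.counit (R := ℂ)) y)) := by
    intro y
    induction y using TensorProduct.induction_on with
    | zero => simp
    | tmul p q => simp [smul_eq_mul, mul_comm]
    | add u v hu hv => simp only [map_add, hu, hv]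
  have hφε : ∀ x : A, φ x = Coalgebra.counit (R := ℂ) x := by
    intro x
    conv_rhs => rw [← key1 x]
    rw [key2, Coalgebra.lTensor_counit_comul]
    simp
  have hεs : ∀ x : A,
      Coalgebra.counit (R := ℂ) (star x) = star (Coalgebra.counit (R := ℂ) x) := by
    intro x
    have h := hφε x
    rw [hφ_apply] at h
    rw [← h, star_star]
  -- the T-collapse
  have hTCpt : ∀ d : A, nmap (Coalgebra.comul d) = Coalgebra.counit (R := ℂ) d • (1 : A) := by
    intro d
    have h1 : ∀ y : A ⊗[ℂ] A,
        nmap y = star (LinearMap.mul' ℂ A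
          ((HopfAlgebra.antipode (R := ℂ) (A := A)).lTensor A (cstar y))) := by
      intro y
      induction y using TensorProduct.induction_on with
      | zero => simp
      | tmul p q => simp [star_mul]
      | add u v hu hv => simp only [map_add, star_add, hu, hv]
    rw [h1, ← hΔs, HopfAlgebra.mul_antipode_lTensor_comul_apply, hεs,
      Algebra.algebraMap_eq_smul_one, star_smul, star_star, star_one]
  have hσE : ∀ (a : A) (b : B),
      σ (a ⊗ₜ b) = TensorProduct.map LinearMap.id (J act (star b))
        (Coalgebra.comul (star a)) := by
    intro a b; rw [hσ, twistR_tmul']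
  refine ⟨?_, ?_, ?_⟩
  · -- part 1
    intro a b
    rw [hσE, smashMul_tmul, LinearMap.mulLeft_one, LinearMap.mulRight_one, LinearMap.id_comp]
  · -- part 2
    have core : ∀ (a : A) (b : B) (a' : A) (b' : B),
        σ (smashMul ℂ A B act ((a ⊗ₜ b) ⊗ₜ (a' ⊗ₜ b')))
          = smashMul ℂ A B act (σ (a' ⊗ₜ b') ⊗ₜ σ (a ⊗ₜ b)) := by
      intro a b a' b'
      set mB : A →ₗ[ℂ] B := LinearMap.mulLeft ℂ (star b') ∘ₗ J act (star b) ∘ₗ Tmap with hmBdef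
      have hmB : ∀ β : A, mB β = star b' * act (star b ⊗ₜ Tmap β) := fun β => rfl
      set Lam : A ⊗[ℂ] A →ₗ[ℂ] A ⊗[ℂ] B :=
        twistR ℂ A B act ∘ₗ TensorProduct.map mB (LinearMap.mulRight ℂ (star a)) ∘ₗ
          (TensorProduct.comm ℂ A A).toLinearMap with hLamdef
      have hLam : ∀ (α β : A),
          Lam (α ⊗ₜ β) = twistR ℂ A B act ((mB β) ⊗ₜ (α * star a)) := by
        intro α β
        simp [hLamdef]
      set bigOm : (A ⊗[ℂ] (A ⊗[ℂ] A)) ⊗[ℂ] (A ⊗[ℂ] (A ⊗[ℂ] A)) →ₗ[ℂ] A ⊗[ℂ] B :=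
        TensorProduct.map (LinearMap.mul' ℂ A)
          (LinearMap.mul' ℂ B ∘ₗ
            TensorProduct.map (J act (star b') ∘ₗ LinearMap.mul' ℂ A)
              (J act (star b) ∘ₗ LinearMap.mul' ℂ A) ∘ₗ
            (TensorProduct.tensorTensorTensorComm ℂ A A A A).toLinearMap) ∘ₗ
          (TensorProduct.tensorTensorTensorComm ℂ A (A ⊗[ℂ] A) A (A ⊗[ℂ] A)).toLinearMap
        with hbigOmdef
      have hbigOm : ∀ (r v' s p v w : A),
          bigOm ((r ⊗ₜ (v' ⊗ₜ s)) ⊗ₜ (p ⊗ₜ (v ⊗ₜ w)))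
            = (r * p) ⊗ₜ ((act (star b' ⊗ₜ (v' * v))) * (act (star b ⊗ₜ (s * w)))) := by
        intro r v' s p v w
        simp [hbigOmdef]
      set X : A ⊗[ℂ] (A ⊗[ℂ] A) :=
        LinearMap.lTensor A (Coalgebra.comul (R := ℂ)) (Coalgebra.comul (star a)) with hXdef
      -- Step B : express the LHS via Lam
      have hstepB : ∀ z : A ⊗[ℂ] A,
          σ (TensorProduct.map (LinearMap.mulLeft ℂ a) (LinearMap.mulRight ℂ b' ∘ₗ J act b) z)
            = Lam (cstar z) := by
        intro z
        induction z using TensorProduct.induction_on with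
        | zero => simp [hσ0]
        | tmul p' q' =>
            rw [map_tmul, LinearMap.mulLeft_apply, LinearMap.comp_apply,
              LinearMap.mulRight_apply, J_apply, hσ, star_mul, star_mul, hstaract,
              cstar_tmul, hLam, hmB, Tmap_apply, star_star]
        | add u v hu hv => simp only [map_add, hσadd, hu, hv]
      have hLHS1 : σ (smashMul ℂ A B act ((a ⊗ₜ b) ⊗ₜ (a' ⊗ₜ b')))
          = Lam (Coalgebra.comul (star a')) := by
        rw [smashMul_tmul, hstepB, ← hΔs]
      set Xi2 : (A ⊗[ℂ] A) ⊗[ℂ] A →ₗ[ℂ] A ⊗[ℂ] B :=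
        chi act ∘ₗ TensorProduct.map
          (LinearMap.mulRight ℂ (Coalgebra.comul (R := ℂ) (star a))) mB with hXi2def
      have hXi2 : ∀ (z : A ⊗[ℂ] A) (β : A),
          Xi2 (z ⊗ₜ β) = chi act ((z * Coalgebra.comul (star a)) ⊗ₜ mB β) := by
        intro z β
        simp [hXi2def]
      have hLam2 : ∀ z : A ⊗[ℂ] A,
          Lam z = Xi2 (LinearMap.rTensor A (Coalgebra.comul (R := ℂ)) z) := by
        intro z
        induction z using TensorProduct.induction_on with
        | zero => simp
        | tmul α β =>
            rw [hLam, twistR_tmul, Bialgebra.comul_mul, LinearMap.rTensor_tmul, hXi2]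
        | add u v hu hv => simp only [map_add, hu, hv]
      set Kmap : A ⊗[ℂ] A →ₗ[ℂ] A ⊗[ℂ] A :=
        LinearMap.lTensor A nmap ∘ₗ (TensorProduct.assoc ℂ A A A).toLinearMap ∘ₗ
          LinearMap.rTensor A (Coalgebra.comul (R := ℂ)) with hKdef
      have hKmap : ∀ (u β : A), Kmap (u ⊗ₜ β)
          = LinearMap.lTensor A nmap
              ((TensorProduct.assoc ℂ A A A) ((Coalgebra.comul u) ⊗ₜ β)) := by
        intro u β
        simp [hKdef]
      -- the big step F
      have hF : ∀ (r u β : A),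
          Xi2 ((r ⊗ₜ u) ⊗ₜ β) = bigOm ((r ⊗ₜ (Kmap (u ⊗ₜ β))) ⊗ₜ X) := by
        intro r u β
        rw [hXi2, hKmap, hXdef]
        generalize Coalgebra.comul (R := ℂ) (star a) = Zc
        induction Zc using TensorProduct.induction_on with
        | zero => simp
        | tmul p q =>
            rw [Algebra.TensorProduct.tmul_mul_tmul, chi_tmul, LinearMap.lTensor_tmul,
              hmB, hma, Bialgebra.comul_mul]
            have inner : ∀ (Y Z : A ⊗[ℂ] A),
                (r * p) ⊗ₜ[ℂ] ((LinearMap.mul' ℂ B ∘ₗ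
                    TensorProduct.map (act ∘ₗ TensorProduct.mk ℂ B A (star b'))
                      (act ∘ₗ TensorProduct.mk ℂ B A (act (star b ⊗ₜ Tmap β)))) (Y * Z))
                  = bigOm ((r ⊗ₜ (LinearMap.lTensor A nmap
                      ((TensorProduct.assoc ℂ A A A) (Y ⊗ₜ β)))) ⊗ₜ (p ⊗ₜ Z)) := by
              intro Y Z
              induction Y using TensorProduct.induction_on generalizing Z with
              | zero => simp
              | tmul v' w' =>
                  induction Z using TensorProduct.induction_on with
                  | zero => simp
                  | tmul v w =>
                      rw [Algebra.TensorProduct.tmul_mul_tmul, LinearMap.comp_apply,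
                        map_tmul, LinearMap.mul'_apply, assoc_tmul, LinearMap.lTensor_tmul,
                        nmap_tmul, hbigOm]
                      simp only [LinearMap.comp_apply, mk_apply, hmod, mul_assoc]
                  | add Z1 Z2 h1 h2 =>
                      simp only [mul_add, map_add, tmul_add, h1, h2]
              | add Y1 Y2 h1 h2 =>
                  simp only [add_mul, map_add, add_tmul, tmul_add, h1 Z, h2 Z]
            exact inner _ _
        | add z z' hz hz' =>
            simp only [mul_add, add_tmul, tmul_add, map_add, hz, hz']
      have hG : ∀ Z : A ⊗[ℂ] (A ⊗[ℂ] A),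
          Xi2 ((TensorProduct.assoc ℂ A A A).symm Z)
            = bigOm ((LinearMap.lTensor A Kmap Z) ⊗ₜ X) := by
        intro Z
        induction Z using TensorProduct.induction_on with
        | zero => simp
        | tmul r yz =>
            induction yz using TensorProduct.induction_on with
            | zero => simp
            | tmul u β =>
                rw [assoc_symm_tmul, LinearMap.lTensor_tmul]
                exact hF r u β
            | add y1 y2 h1 h2 =>
                simp only [tmul_add, map_add, add_tmul, h1, h2]
        | add Z1 Z2 h1 h2 => simp only [map_add, add_tmul, h1, h2]
      have hKΔpt : ∀ d : A, Kmap (Coalgebra.comul d) = d ⊗ₜ (1 : A) := by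
        intro d
        rw [hKdef]
        simp only [LinearMap.comp_apply, LinearEquiv.coe_coe]
        rw [Coalgebra.coassoc_apply]
        have aux : ∀ z : A ⊗[ℂ] A,
            LinearMap.lTensor A nmap (LinearMap.lTensor A (Coalgebra.comul (R := ℂ)) z)
              = (TensorProduct.rid ℂ A
                  (LinearMap.lTensor A (Coalgebra.counit (R := ℂ)) z)) ⊗ₜ (1 : A) := by
          intro z
          induction z using TensorProduct.induction_on with
          | zero => simp
          | tmul p e =>
              rw [LinearMap.lTensor_tmul, LinearMap.lTensor_tmul, hTCpt,
                LinearMap.lTensor_tmul]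
              simp [TensorProduct.smul_tmul]
          | add u v hu hv => simp only [map_add, add_tmul, hu, hv]
        rw [aux, Coalgebra.lTensor_counit_comul]
        simp
      have hKc : Kmap ∘ₗ Coalgebra.comul = (TensorProduct.mk ℂ A A).flip 1 :=
        LinearMap.ext fun d => by rw [LinearMap.comp_apply, hKΔpt]; rfl
      have hLK : LinearMap.lTensor A Kmap
            (LinearMap.lTensor A (Coalgebra.comul (R := ℂ)) (Coalgebra.comul (star a')))
          = LinearMap.lTensor A ((TensorProduct.mk ℂ A A).flip 1)
              (Coalgebra.comul (star a')) := by
        rw [← LinearMap.comp_apply, ← LinearMap.lTensor_comp, hKc]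
      -- RHS chain
      have hR3 : ∀ (α β q : A) (Y : A ⊗[ℂ] A),
          TensorProduct.map (LinearMap.mulLeft ℂ α)
              (LinearMap.mulRight ℂ (act (star b ⊗ₜ q)) ∘ₗ J act (act (star b' ⊗ₜ β))) Y
            = bigOm ((α ⊗ₜ (β ⊗ₜ (1 : A))) ⊗ₜ ((TensorProduct.assoc ℂ A A A) (Y ⊗ₜ q))) := by
        intro α β q Y
        induction Y using TensorProduct.induction_on with
        | zero => simp
        | tmul r u =>
            rw [map_tmul, assoc_tmul, hbigOm, LinearMap.mulLeft_apply,
              LinearMap.comp_apply, LinearMap.mulRight_apply, J_apply, hmod, one_mul]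
        | add u v hu hv => simp only [map_add, add_tmul, tmul_add, hu, hv]
      have hR2 : ∀ (α β : A) (w : A ⊗[ℂ] A),
          smashMul ℂ A B act ((α ⊗ₜ act (star b' ⊗ₜ β)) ⊗ₜ
              (TensorProduct.map LinearMap.id (J act (star b)) w))
            = bigOm ((α ⊗ₜ (β ⊗ₜ (1 : A))) ⊗ₜ
                ((TensorProduct.assoc ℂ A A A)
                  (LinearMap.rTensor A (Coalgebra.comul (R := ℂ)) w))) := by
        intro α β w
        induction w using TensorProduct.induction_on with
        | zero => simp
        | tmul p q =>
            rw [map_tmul, LinearMap.id_apply, J_apply, smashMul_tmul,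
              LinearMap.rTensor_tmul]
            exact hR3 α β q (Coalgebra.comul p)
        | add u v hu hv => simp only [map_add, tmul_add, hu, hv]
      have hRHS : smashMul ℂ A B act (σ (a' ⊗ₜ b') ⊗ₜ σ (a ⊗ₜ b))
          = bigOm ((LinearMap.lTensor A ((TensorProduct.mk ℂ A A).flip 1)
              (Coalgebra.comul (star a'))) ⊗ₜ X) := by
        rw [hσE a b, hσE a' b']
        have main : ∀ z : A ⊗[ℂ] A,
            smashMul ℂ A B act ((TensorProduct.map LinearMap.id (J act (star b')) z) ⊗ₜ
                (TensorProduct.map LinearMap.id (J act (star b))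
                  (Coalgebra.comul (star a))))
              = bigOm ((LinearMap.lTensor A ((TensorProduct.mk ℂ A A).flip 1) z) ⊗ₜ X) := by
          intro z
          induction z using TensorProduct.induction_on with
          | zero => simp
          | tmul α β =>
              rw [map_tmul, LinearMap.id_apply, J_apply, hR2, Coalgebra.coassoc_apply,
                LinearMap.lTensor_tmul, hXdef]
              rfl
          | add u v hu hv => simp only [map_add, add_tmul, hu, hv]
        exact main _
      calc σ (smashMul ℂ A B act ((a ⊗ₜ b) ⊗ₜ (a' ⊗ₜ b')))
          = Lam (Coalgebra.comul (star a')) := hLHS1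
        _ = Xi2 (LinearMap.rTensor A (Coalgebra.comul (R := ℂ))
              (Coalgebra.comul (star a'))) := hLam2 _
        _ = Xi2 ((TensorProduct.assoc ℂ A A A).symm
              (LinearMap.lTensor A (Coalgebra.comul (R := ℂ))
                (Coalgebra.comul (star a')))) := by
              rw [Coalgebra.coassoc_symm_apply]
        _ = bigOm ((LinearMap.lTensor A Kmap
              (LinearMap.lTensor A (Coalgebra.comul (R := ℂ))
                (Coalgebra.comul (star a')))) ⊗ₜ X) := hG _
        _ = bigOm ((LinearMap.lTensor A ((TensorProduct.mk ℂ A A).flip 1)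
              (Coalgebra.comul (star a'))) ⊗ₜ X) := by rw [hLK]
        _ = smashMul ℂ A B act (σ (a' ⊗ₜ b') ⊗ₜ σ (a ⊗ₜ b)) := hRHS.symm
    intro x y
    induction x using TensorProduct.induction_on with
    | zero => rw [zero_tmul, map_zero, hσ0, tmul_zero, map_zero]
    | tmul a b =>
        induction y using TensorProduct.induction_on with
        | zero => rw [tmul_zero, map_zero, hσ0, zero_tmul, map_zero]
        | tmul a' b' => exact core a b a' b'
        | add u v hu hv =>
            rw [tmul_add, map_add, hσadd, hu, hv, hσadd, add_tmul, map_add]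
    | add u v hu hv =>
        rw [add_tmul, map_add, hσadd, hu, hv, hσadd, tmul_add, map_add]

  · -- part 3
    have core : ∀ (a : A) (b : B), σ (σ (a ⊗ₜ b)) = a ⊗ₜ b := by
      intro a b
      rw [hσE]
      have Q1 : ∀ y : A ⊗[ℂ] A,
          σ (TensorProduct.map LinearMap.id (J act (star b)) y)
            = chi act (TensorProduct.map (Coalgebra.comul (R := ℂ))
                (J act b ∘ₗ Tmap) (cstar y)) := by
        intro y
        induction y using TensorProduct.induction_on with
        | zero => simp [hσ0]
        | tmul p q =>
            rw [map_tmul, LinearMap.id_apply, J_apply, hσ, hstaract, star_star,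
              twistR_tmul, cstar_tmul, map_tmul]
            simp
        | add u v hu hv => simp only [map_add, hσadd, hu, hv]
      rw [Q1, ← hΔs, star_star]
      -- chi (map comul (Jb∘T) (comul a)) = a ⊗ b
      have Q2 : ∀ z : A ⊗[ℂ] A,
          chi act (TensorProduct.map (Coalgebra.comul (R := ℂ)) (J act b ∘ₗ Tmap) z)
            = TensorProduct.map LinearMap.id (J act b ∘ₗ nmap)
                ((TensorProduct.assoc ℂ A A A)
                  (LinearMap.rTensor A (Coalgebra.comul (R := ℂ)) z)) := by
        intro z
        induction z using TensorProduct.induction_on with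
        | zero => simp
        | tmul α β =>
            rw [map_tmul, LinearMap.rTensor_tmul, chi_map]
            have inner : ∀ Y : A ⊗[ℂ] A,
                TensorProduct.map LinearMap.id (J act ((J act b ∘ₗ Tmap) β)) Y
                  = TensorProduct.map LinearMap.id (J act b ∘ₗ nmap)
                      ((TensorProduct.assoc ℂ A A A) (Y ⊗ₜ β)) := by
              intro Y
              induction Y using TensorProduct.induction_on with
              | zero => simp
              | tmul r u => simp [hmod]
              | add u v hu hv => rw [map_add, hu, hv, add_tmul, map_add, map_add]
            exact inner _
        | add u v hu hv => simp only [map_add, hu, hv]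
      rw [Q2, Coalgebra.coassoc_apply]
      -- map id (Jb∘n) (lTensor comul (comul a)) = a ⊗ b
      have Q3 : ∀ z : A ⊗[ℂ] A,
          TensorProduct.map LinearMap.id (J act b ∘ₗ nmap)
              (LinearMap.lTensor A (Coalgebra.comul (R := ℂ)) z)
            = (TensorProduct.rid ℂ A
                (LinearMap.lTensor A (Coalgebra.counit (R := ℂ)) z)) ⊗ₜ b := by
        intro z
        induction z using TensorProduct.induction_on with
        | zero => simp
        | tmul p e =>
            rw [LinearMap.lTensor_tmul, map_tmul, LinearMap.id_apply, LinearMap.comp_apply,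
              hTCpt, LinearMap.lTensor_tmul]
            simp [hone, TensorProduct.smul_tmul]
        | add u v hu hv => simp only [map_add, hu, hv, add_tmul]
      rw [Q3, Coalgebra.lTensor_counit_comul]
      simp
    intro x
    induction x using TensorProduct.induction_on with
    | zero => rw [hσ0, hσ0]
    | tmul a b => exact core a b
    | add u v hu hv => rw [hσadd, hσadd, hu, hv]
end

section
/- Let G be a group with subgroups H, K such that G = KH and H ∩ K = {e}, with the matched pair actions ▷, ◁ defined by hk = (h ▷ k)(h ◁ k). On the vector space ℂH ⊗ F(K) with the smash product algebra structure (h δ_k)(h' δ_{k'}) = [k = h' ▷ k'] (hh') δ_{k'}, the map Δ_#(h δ_k) = Σ_{k'k''=k} (h δ_{k'}) ⊗ ((h ◁ k') δ_{k''}) is multiplicative: Δ_#(xy) = Δ_#(x)Δ_#(y) for all x, y in the smash product. -/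
open Finsupp
open scoped Classical

section

variable {G : Type*} [Group G] {H K : Subgroup G}

/-- Basis product of the smash product `ℂH # F(K)`:
`(h δ_k)(h' δ_{k'}) = [k = h' ▷ k'] (hh') δ_{k'}`. -/
noncomputable def mulBasis (tr : H → K → K) (p q : H × K) : H × K →₀ ℂ :=
  if p.2 = tr q.1 q.2 then Finsupp.single (p.1 * q.1, q.2) 1 else 0

/-- The smash product multiplication on `ℂH ⊗ F(K) ≅ (H × K →₀ ℂ)`. -/
noncomputable def mulW (tr : H → K → K) (x y : H × K →₀ ℂ) : H × K →₀ ℂ :=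
  x.sum fun p a => y.sum fun q b => (a * b) • mulBasis tr p q

/-- The coproduct on basis elements:
`Δ_#(h δ_k) = Σ_{k'k''=k} (h δ_{k'}) ⊗ ((h ◁ k') δ_{k''})`. -/
noncomputable def deltaBasis [Fintype K] (tl : H → K → H) (p : H × K) :
    (H × K) × (H × K) →₀ ℂ :=
  ∑ k' : K, Finsupp.single ((p.1, k'), (tl p.1 k', k'⁻¹ * p.2)) 1

/-- The coproduct `Δ_#` on the smash product. -/
noncomputable def deltaW [Fintype K] (tl : H → K → H) (x : H × K →₀ ℂ) :
    (H × K) × (H × K) →₀ ℂ :=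
  x.sum fun p a => a • deltaBasis tl p

/-- The tensor product of two elements of `(H × K →₀ ℂ)`, inside
`((H × K) × (H × K)) →₀ ℂ`. -/
noncomputable def tensW (x y : H × K →₀ ℂ) : (H × K) × (H × K) →₀ ℂ :=
  x.sum fun p a => y.sum fun q b => Finsupp.single (p, q) (a * b)

/-- The componentwise (tensor product) multiplication on
`((H × K) × (H × K)) →₀ ℂ ≅ (ℂH # F(K)) ⊗ (ℂH # F(K))`. -/
noncomputable def mulW2 (tr : H → K → K) (X Y : (H × K) × (H × K) →₀ ℂ) :
    (H × K) × (H × K) →₀ ℂ :=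
  X.sum fun pq a => Y.sum fun rs b =>
    (a * b) • tensW (mulBasis tr pq.1 rs.1) (mulBasis tr pq.2 rs.2)

end

section SmashAux
variable {G : Type*} [Group G] {H K : Subgroup G}

lemma uniq_fact (hHK : H ⊓ K = ⊥) (k₁ k₂ : K) (h₁ h₂ : H)
    (h : (k₁ : G) * h₁ = (k₂ : G) * h₂) : k₁ = k₂ ∧ h₁ = h₂ := by
  have hg : ((k₂⁻¹ * k₁ : K) : G) = ((h₂ * h₁⁻¹ : H) : G) := by
    push_cast
    have := congrArg (fun g => (k₂ : G)⁻¹ * g * (h₁ : G)⁻¹) h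
    simpa [mul_assoc] using this
  have hmem : ((k₂⁻¹ * k₁ : K) : G) ∈ H ⊓ K :=
    ⟨hg.symm ▸ (h₂ * h₁⁻¹).2, (k₂⁻¹ * k₁ : K).2⟩
  rw [hHK, Subgroup.mem_bot] at hmem
  constructor
  · have : k₂⁻¹ * k₁ = 1 := by ext; simpa using hmem
    rw [inv_mul_eq_one] at this; exact this.symm
  · have : h₂ * h₁⁻¹ = 1 := by ext; simpa using (hg.symm.trans hmem)
    rw [mul_inv_eq_one] at this; exact this.symm

lemma matched_H (hHK : H ⊓ K = ⊥) (tr : H → K → K) (tl : H → K → H)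
    (hdef : ∀ (h : H) (k : K), (h : G) * (k : G) = (tr h k : G) * (tl h k : G))
    (h₁ h₂ : H) (k : K) :
    tr (h₁ * h₂) k = tr h₁ (tr h₂ k) ∧ tl (h₁ * h₂) k = tl h₁ (tr h₂ k) * tl h₂ k := by
  have A : ((tr (h₁ * h₂) k : K) : G) * (tl (h₁ * h₂) k : G) = (h₁ : G) * h₂ * k := by
    rw [← hdef (h₁ * h₂) k]; push_cast; rw [mul_assoc]
  have B : ((tr h₁ (tr h₂ k) : K) : G) * ((tl h₁ (tr h₂ k) * tl h₂ k : H) : G)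
      = (h₁ : G) * h₂ * k := by
    push_cast
    rw [← mul_assoc, ← hdef h₁ (tr h₂ k), mul_assoc, ← hdef h₂ k, ← mul_assoc]
  exact uniq_fact hHK _ _ _ _ (A.trans B.symm)

lemma matched_K (hHK : H ⊓ K = ⊥) (tr : H → K → K) (tl : H → K → H)
    (hdef : ∀ (h : H) (k : K), (h : G) * (k : G) = (tr h k : G) * (tl h k : G))
    (h : H) (k₁ k₂ : K) :
    tr h (k₁ * k₂) = tr h k₁ * tr (tl h k₁) k₂ ∧ tl h (k₁ * k₂) = tl (tl h k₁) k₂ := by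
  have A : ((tr h (k₁ * k₂) : K) : G) * (tl h (k₁ * k₂) : G) = (h : G) * k₁ * k₂ := by
    rw [← hdef h (k₁ * k₂)]; push_cast; rw [mul_assoc]
  have B : ((tr h k₁ * tr (tl h k₁) k₂ : K) : G) * ((tl (tl h k₁) k₂ : H) : G)
      = (h : G) * k₁ * k₂ := by
    push_cast
    rw [mul_assoc, ← hdef (tl h k₁) k₂, ← mul_assoc, ← hdef h k₁]
  exact uniq_fact hHK _ _ _ _ (A.trans B.symm)


-- mulW lemmas
lemma mulW_zero_left (tr : H → K → K) (y : H × K →₀ ℂ) : mulW tr 0 y = 0 := by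
  simp [mulW]

lemma mulW_zero_right (tr : H → K → K) (x : H × K →₀ ℂ) : mulW tr x 0 = 0 := by
  simp [mulW]

lemma mulW_add_left (tr : H → K → K) (x x' y : H × K →₀ ℂ) :
    mulW tr (x + x') y = mulW tr x y + mulW tr x' y := by
  unfold mulW
  rw [Finsupp.sum_add_index']
  · intro p; simp
  · intro p a a'; simp [add_mul, add_smul, Finsupp.sum_add]

lemma mulW_add_right (tr : H → K → K) (x y y' : H × K →₀ ℂ) :
    mulW tr x (y + y') = mulW tr x y + mulW tr x y' := by
  unfold mulW
  rw [← Finsupp.sum_add]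
  apply Finsupp.sum_congr
  intro p _
  rw [Finsupp.sum_add_index']
  · intro q; simp
  · intro q b b'; simp [mul_add, add_smul]

lemma mulW_single_single (tr : H → K → K) (p q : H × K) (a b : ℂ) :
    mulW tr (Finsupp.single p a) (Finsupp.single q b) = (a * b) • mulBasis tr p q := by
  unfold mulW
  rw [Finsupp.sum_single_index, Finsupp.sum_single_index]
  · simp
  · simp

-- deltaW lemmas
lemma deltaW_zero [Fintype K] (tl : H → K → H) : deltaW tl (0 : H × K →₀ ℂ) = 0 := by
  simp [deltaW]

lemma deltaW_add [Fintype K] (tl : H → K → H) (x x' : H × K →₀ ℂ) :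
    deltaW tl (x + x') = deltaW tl x + deltaW tl x' := by
  unfold deltaW
  rw [Finsupp.sum_add_index']
  · intro p; simp
  · intro p a a'; simp [add_smul]

lemma deltaW_single [Fintype K] (tl : H → K → H) (p : H × K) (a : ℂ) :
    deltaW tl (Finsupp.single p a) = a • deltaBasis tl p := by
  unfold deltaW
  rw [Finsupp.sum_single_index]
  simp

lemma deltaW_smul [Fintype K] (tl : H → K → H) (c : ℂ) (x : H × K →₀ ℂ) :
    deltaW tl (c • x) = c • deltaW tl x := by
  unfold deltaW
  rw [Finsupp.sum_smul_index, Finsupp.smul_sum]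
  · simp [mul_smul]
  · intro p; simp

-- tensW lemmas
lemma tensW_zero_left (y : H × K →₀ ℂ) : tensW (0 : H × K →₀ ℂ) y = 0 := by
  simp [tensW]

lemma tensW_zero_right (x : H × K →₀ ℂ) : tensW x (0 : H × K →₀ ℂ) = 0 := by
  simp [tensW]

lemma tensW_single_single (p q : H × K) (a b : ℂ) :
    tensW (Finsupp.single p a) (Finsupp.single q b) = Finsupp.single (p, q) (a * b) := by
  unfold tensW
  rw [Finsupp.sum_single_index, Finsupp.sum_single_index]
  · simp
  · simp

-- mulW2 lemmas
lemma mulW2_zero_left (tr : H → K → K) (Y : (H × K) × (H × K) →₀ ℂ) :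
    mulW2 tr 0 Y = 0 := by simp [mulW2]

lemma mulW2_zero_right (tr : H → K → K) (X : (H × K) × (H × K) →₀ ℂ) :
    mulW2 tr X 0 = 0 := by simp [mulW2]

lemma mulW2_add_left (tr : H → K → K) (X X' Y : (H × K) × (H × K) →₀ ℂ) :
    mulW2 tr (X + X') Y = mulW2 tr X Y + mulW2 tr X' Y := by
  unfold mulW2
  rw [Finsupp.sum_add_index']
  · intro pq; simp
  · intro pq a a'; simp [add_mul, add_smul, Finsupp.sum_add]

lemma mulW2_add_right (tr : H → K → K) (X Y Y' : (H × K) × (H × K) →₀ ℂ) :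
    mulW2 tr X (Y + Y') = mulW2 tr X Y + mulW2 tr X Y' := by
  unfold mulW2
  rw [← Finsupp.sum_add]
  apply Finsupp.sum_congr
  intro pq _
  rw [Finsupp.sum_add_index']
  · intro rs; simp
  · intro rs b b'; simp [mul_add, add_smul]

lemma mulW2_smul_left (tr : H → K → K) (c : ℂ) (X Y : (H × K) × (H × K) →₀ ℂ) :
    mulW2 tr (c • X) Y = c • mulW2 tr X Y := by
  unfold mulW2
  rw [Finsupp.sum_smul_index, Finsupp.smul_sum]
  · apply Finsupp.sum_congr
    intro pq _
    rw [Finsupp.smul_sum]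
    apply Finsupp.sum_congr
    intro rs _
    rw [mul_assoc, mul_smul]
  · intro pq; simp

lemma mulW2_smul_right (tr : H → K → K) (c : ℂ) (X Y : (H × K) × (H × K) →₀ ℂ) :
    mulW2 tr X (c • Y) = c • mulW2 tr X Y := by
  unfold mulW2
  rw [Finsupp.smul_sum]
  apply Finsupp.sum_congr
  intro pq _
  rw [Finsupp.sum_smul_index, Finsupp.smul_sum]
  · apply Finsupp.sum_congr
    intro rs _
    rw [show ∀ a b : ℂ, a * (c * b) = c * (a * b) by intros; ring, mul_smul]
  · intro rs; simp

lemma mulW2_single_single (tr : H → K → K) (pq rs : (H × K) × (H × K)) (a b : ℂ) :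
    mulW2 tr (Finsupp.single pq a) (Finsupp.single rs b) =
      (a * b) • tensW (mulBasis tr pq.1 rs.1) (mulBasis tr pq.2 rs.2) := by
  unfold mulW2
  rw [Finsupp.sum_single_index, Finsupp.sum_single_index]
  · simp
  · simp

-- generic finset sum helper
lemma map_finset_sum_aux {ι M N : Type*} [AddCommMonoid M] [AddCommMonoid N]
    (F : M → N) (h0 : F 0 = 0) (hadd : ∀ x y, F (x + y) = F x + F y)
    (s : Finset ι) (g : ι → M) : F (∑ i ∈ s, g i) = ∑ i ∈ s, F (g i) := by
  classical
  induction s using Finset.induction_on with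
  | empty => simpa using h0
  | insert _ _ hni ih => rw [Finset.sum_insert hni, Finset.sum_insert hni, hadd, ih]

lemma core [Fintype K] (tr : H → K → K) (tl : H → K → H)
    (Itl : ∀ h₁ h₂ k, tl (h₁ * h₂) k = tl h₁ (tr h₂ k) * tl h₂ k)
    (Ktr : ∀ h k₁ k₂, tr h (k₁ * k₂) = tr h k₁ * tr (tl h k₁) k₂)
    (p q : H × K) :
    deltaW tl (mulBasis tr p q) = mulW2 tr (deltaBasis tl p) (deltaBasis tl q) := by
  have hfactor : ∀ k₂ : K, tr q.1 q.2 = tr q.1 k₂ * tr (tl q.1 k₂) (k₂⁻¹ * q.2) := by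
    intro k₂
    conv_lhs => rw [show q.2 = k₂ * (k₂⁻¹ * q.2) by group]
    exact Ktr q.1 k₂ (k₂⁻¹ * q.2)
  have hterm : ∀ k₁ k₂ : K,
      mulW2 tr (Finsupp.single ((p.1, k₁), (tl p.1 k₁, k₁⁻¹ * p.2)) (1 : ℂ))
        (Finsupp.single ((q.1, k₂), (tl q.1 k₂, k₂⁻¹ * q.2)) (1 : ℂ))
      = if k₁ = tr q.1 k₂ then
          (if p.2 = tr q.1 q.2 then
            Finsupp.single ((p.1 * q.1, k₂), (tl (p.1 * q.1) k₂, k₂⁻¹ * q.2)) (1 : ℂ)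
          else 0)
        else 0 := by
    intro k₁ k₂
    rw [mulW2_single_single]
    simp only [mulBasis]
    by_cases h1 : k₁ = tr q.1 k₂
    · subst h1
      by_cases h2 : p.2 = tr q.1 q.2
      · have hcond2 : (tr q.1 k₂)⁻¹ * p.2 = tr (tl q.1 k₂) (k₂⁻¹ * q.2) := by
          rw [h2, hfactor k₂]; group
        rw [if_pos rfl, if_pos hcond2, if_pos h2, tensW_single_single, ← Itl p.1 q.1 k₂]
        norm_num
      · have hcond2 : ¬ ((tr q.1 k₂)⁻¹ * p.2 = tr (tl q.1 k₂) (k₂⁻¹ * q.2)) := by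
          intro hc
          apply h2
          rw [hfactor k₂, ← hc]
          group
        rw [if_pos rfl, if_neg hcond2, if_neg h2, tensW_zero_right]
        simp
    · rw [if_neg h1, if_neg h1, tensW_zero_left]
      simp
  have hRHS : mulW2 tr (deltaBasis tl p) (deltaBasis tl q)
      = ∑ k₂ : K, if p.2 = tr q.1 q.2 then
          Finsupp.single ((p.1 * q.1, k₂), (tl (p.1 * q.1) k₂, k₂⁻¹ * q.2)) (1 : ℂ)
        else 0 := by
    rw [show deltaBasis tl p = ∑ k' : K,
        Finsupp.single ((p.1, k'), (tl p.1 k', k'⁻¹ * p.2)) (1 : ℂ) from rfl]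
    rw [map_finset_sum_aux (fun X => mulW2 tr X (deltaBasis tl q))
        (mulW2_zero_left tr _) (fun X X' => mulW2_add_left tr X X' _)]
    have : ∀ k₁ : K,
        mulW2 tr (Finsupp.single ((p.1, k₁), (tl p.1 k₁, k₁⁻¹ * p.2)) (1 : ℂ))
          (deltaBasis tl q)
        = ∑ k₂ : K, if k₁ = tr q.1 k₂ then
            (if p.2 = tr q.1 q.2 then
              Finsupp.single ((p.1 * q.1, k₂), (tl (p.1 * q.1) k₂, k₂⁻¹ * q.2)) (1 : ℂ)
            else 0)
          else 0 := by
      intro k₁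
      rw [show deltaBasis tl q = ∑ k' : K,
          Finsupp.single ((q.1, k'), (tl q.1 k', k'⁻¹ * q.2)) (1 : ℂ) from rfl]
      rw [map_finset_sum_aux (fun Y => mulW2 tr _ Y)
          (mulW2_zero_right tr _) (fun Y Y' => mulW2_add_right tr _ Y Y')]
      exact Finset.sum_congr rfl fun k₂ _ => hterm k₁ k₂
    rw [Finset.sum_congr rfl fun k₁ _ => this k₁, Finset.sum_comm]
    exact Finset.sum_congr rfl fun k₂ _ => by
      rw [Finset.sum_ite_eq' Finset.univ (tr q.1 k₂)]
      simp
  rw [hRHS]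
  by_cases hc : p.2 = tr q.1 q.2
  · simp [mulBasis, hc, deltaW_single, deltaBasis]
  · simp only [mulBasis, if_neg hc, deltaW_zero, if_neg hc]
    simp

end SmashAux

/-- For a matched pair of subgroups (`G = KH`, `H ∩ K = {e}`) with actions defined by
`hk = (h ▷ k)(h ◁ k)`, the smash coproduct `Δ_#` on the smash product `ℂH # F(K)` is
multiplicative: `Δ_#(xy) = Δ_#(x)Δ_#(y)`.  (As in the source, `K` is assumed finite
so that `Δ_#` takes values in the algebraic tensor product.) -/
theorem smash_coproduct_multiplicative
    {G : Type*} [Group G] (H K : Subgroup G) [Fintype K]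
    (hKH : ∀ g : G, ∃ k ∈ K, ∃ h ∈ H, g = k * h)
    (hHK : H ⊓ K = ⊥)
    (tr : H → K → K) (tl : H → K → H)
    (hdef : ∀ (h : H) (k : K), (h : G) * (k : G) = (tr h k : G) * (tl h k : G)) :
    ∀ x y : H × K →₀ ℂ,
      deltaW tl (mulW tr x y) = mulW2 tr (deltaW tl x) (deltaW tl y) := by
  have Ih := matched_H hHK tr tl hdef
  have Ik := matched_K hHK tr tl hdef
  have key : ∀ (p q : H × K) (a b : ℂ),
      deltaW tl (mulW tr (Finsupp.single p a) (Finsupp.single q b)) =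
        mulW2 tr (deltaW tl (Finsupp.single p a)) (deltaW tl (Finsupp.single q b)) := by
    intro p q a b
    rw [mulW_single_single, deltaW_smul,
      core tr tl (fun h₁ h₂ k => (Ih h₁ h₂ k).2) (fun h k₁ k₂ => (Ik h k₁ k₂).1),
      deltaW_single, deltaW_single, mulW2_smul_left, mulW2_smul_right, smul_smul]
  intro x y
  induction x using Finsupp.induction_linear with
  | zero => simp [mulW_zero_left, deltaW_zero, mulW2_zero_left]
  | add f g hf hg => rw [mulW_add_left, deltaW_add, deltaW_add, mulW2_add_left, hf, hg]
  | single p a =>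
    induction y using Finsupp.induction_linear with
    | zero => simp [mulW_zero_right, deltaW_zero, mulW2_zero_right]
    | add f g hf hg => rw [mulW_add_right, deltaW_add, deltaW_add, mulW2_add_right, hf, hg]
    | single q b => exact key p q a b
end
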